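/- arXiv:2303.08718 — 4 statements merged into one kernel-verified Lean document; each statement's English description precedes it below -/
import Mathlib

section
/- Let P be an m×m stochastic matrix satisfying the Doeblin condition: there exist n₀ ∈ ℕ⁺, κ ∈ (0,1] and a probability vector ν₀ with P^{n₀}(i,j) ≥ κ ν₀(j) for all i,j. Then P has a unique invariant probability measure μ, and for every probability vector ν and all n ≥ 0, ‖ν P^n − μ‖_tv ≤ (1−κ)^{⌊n/n₀⌋}. -/
open Finset Filter

section Aux

variable {m : ℕ}

private lemma vecMul_apply' (v : Fin m → ℝ) (M : Matrix (Fin m) (Fin m) ℝ) (j : Fin m) :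
    Matrix.vecMul v M j = ∑ i, v i * M i j := by
  simp [Matrix.vecMul, dotProduct]

/-- powers of a stochastic matrix are stochastic -/
private lemma pow_stoch (P : Matrix (Fin m) (Fin m) ℝ)
    (hP0 : ∀ i j, 0 ≤ P i j) (hP1 : ∀ i, ∑ j, P i j = 1) (n : ℕ) :
    (∀ i j, 0 ≤ (P ^ n) i j) ∧ (∀ i, ∑ j, (P ^ n) i j = 1) := by
  induction n with
  | zero =>
    constructor
    · intro i j
      by_cases h : i = j <;> simp [Matrix.one_apply, h]
    · intro i; simp [Matrix.one_apply]
  | succ n ih =>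
    have hmul : ∀ i j, (P ^ (n + 1)) i j = ∑ k, (P ^ n) i k * P k j := by
      intro i j; rw [pow_succ, Matrix.mul_apply]
    constructor
    · intro i j; rw [hmul]
      exact Finset.sum_nonneg fun k _ => mul_nonneg (ih.1 i k) (hP0 k j)
    · intro i
      simp only [hmul]
      rw [Finset.sum_comm]
      calc ∑ k, ∑ j, (P ^ n) i k * P k j = ∑ k, (P ^ n) i k * ∑ j, P k j := by
            simp [Finset.mul_sum]
        _ = ∑ k, (P ^ n) i k := by simp [hP1]
        _ = 1 := ih.2 i

/-- vecMul by a stochastic matrix preserves probability vectors -/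
private lemma vecMul_prob (M : Matrix (Fin m) (Fin m) ℝ)
    (hM0 : ∀ i j, 0 ≤ M i j) (hM1 : ∀ i, ∑ j, M i j = 1)
    (ν : Fin m → ℝ) (hν0 : ∀ i, 0 ≤ ν i) (hν1 : ∑ i, ν i = 1) :
    (∀ j, 0 ≤ Matrix.vecMul ν M j) ∧ ∑ j, Matrix.vecMul ν M j = 1 := by
  constructor
  · intro j; rw [vecMul_apply']
    exact Finset.sum_nonneg fun i _ => mul_nonneg (hν0 i) (hM0 i j)
  · simp only [vecMul_apply']
    rw [Finset.sum_comm]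
    calc ∑ i, ∑ j, ν i * M i j = ∑ i, ν i * ∑ j, M i j := by simp [Finset.mul_sum]
      _ = ∑ i, ν i := by simp [hM1]
      _ = 1 := hν1

/-- vecMul by a matrix with rows summing to 1 preserves total sum -/
private lemma vecMul_sum (M : Matrix (Fin m) (Fin m) ℝ) (hM1 : ∀ i, ∑ j, M i j = 1)
    (δ : Fin m → ℝ) : ∑ j, Matrix.vecMul δ M j = ∑ i, δ i := by
  simp only [vecMul_apply']
  rw [Finset.sum_comm]
  calc ∑ i, ∑ j, δ i * M i j = ∑ i, δ i * ∑ j, M i j := by simp [Finset.mul_sum]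
    _ = ∑ i, δ i := by simp [hM1]

/-- the key Doeblin contraction estimate -/
private lemma contract (Q : Matrix (Fin m) (Fin m) ℝ)
    (hQ1 : ∀ i, ∑ j, Q i j = 1)
    (κ : ℝ) (ν₀ : Fin m → ℝ) (hν₀1 : ∑ j, ν₀ j = 1)
    (hD : ∀ i j, κ * ν₀ j ≤ Q i j)
    (δ : Fin m → ℝ) (hδ : ∑ i, δ i = 0) :
    ∑ j, |Matrix.vecMul δ Q j| ≤ (1 - κ) * ∑ i, |δ i| := by
  have key : ∀ j, |Matrix.vecMul δ Q j| ≤ ∑ i, |δ i| * (Q i j - κ * ν₀ j) := by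
    intro j
    have h1 : Matrix.vecMul δ Q j = ∑ i, δ i * (Q i j - κ * ν₀ j) := by
      rw [vecMul_apply']
      simp only [mul_sub]
      rw [Finset.sum_sub_distrib]
      have : ∑ i, δ i * (κ * ν₀ j) = (∑ i, δ i) * (κ * ν₀ j) := by
        rw [Finset.sum_mul]
      rw [this, hδ, zero_mul, sub_zero]
    rw [h1]
    refine (Finset.abs_sum_le_sum_abs _ _).trans (Finset.sum_le_sum fun i _ => ?_)
    rw [abs_mul, abs_of_nonneg (sub_nonneg.2 (hD i j))]
  calc ∑ j, |Matrix.vecMul δ Q j| ≤ ∑ j, ∑ i, |δ i| * (Q i j - κ * ν₀ j) :=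
        Finset.sum_le_sum fun j _ => key j
    _ = ∑ i, |δ i| * (1 - κ) := by
        rw [Finset.sum_comm]
        refine Finset.sum_congr rfl fun i _ => ?_
        rw [← Finset.mul_sum, Finset.sum_sub_distrib, hQ1, ← Finset.mul_sum, hν₀1, mul_one]
    _ = (1 - κ) * ∑ i, |δ i| := by rw [← Finset.sum_mul, mul_comm]

private lemma contract_pow (Q : Matrix (Fin m) (Fin m) ℝ)
    (hQ0 : ∀ i j, 0 ≤ Q i j) (hQ1 : ∀ i, ∑ j, Q i j = 1)
    (κ : ℝ) (hκ1 : κ ≤ 1) (ν₀ : Fin m → ℝ) (hν₀1 : ∑ j, ν₀ j = 1)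
    (hD : ∀ i j, κ * ν₀ j ≤ Q i j)
    (δ : Fin m → ℝ) (hδ : ∑ i, δ i = 0) (q : ℕ) :
    ∑ j, |Matrix.vecMul δ (Q ^ q) j| ≤ (1 - κ) ^ q * ∑ i, |δ i| := by
  induction q with
  | zero => simp [Matrix.vecMul_one]
  | succ q ih =>
    have h1 : Matrix.vecMul δ (Q ^ (q + 1)) = Matrix.vecMul (Matrix.vecMul δ (Q ^ q)) Q := by
      rw [Matrix.vecMul_vecMul, ← pow_succ]
    have hsum : ∑ j, Matrix.vecMul δ (Q ^ q) j = 0 := by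
      rw [vecMul_sum _ (pow_stoch Q hQ0 hQ1 q).2, hδ]
    rw [h1]
    calc ∑ j, |Matrix.vecMul (Matrix.vecMul δ (Q ^ q)) Q j|
        ≤ (1 - κ) * ∑ j, |Matrix.vecMul δ (Q ^ q) j| :=
          contract Q hQ1 κ ν₀ hν₀1 hD _ hsum
      _ ≤ (1 - κ) * ((1 - κ) ^ q * ∑ i, |δ i|) := by
          have h0 : (0:ℝ) ≤ 1 - κ := by linarith
          exact mul_le_mul_of_nonneg_left ih h0
      _ = (1 - κ) ^ (q + 1) * ∑ i, |δ i| := by ring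

/-- L¹ distance between two probability vectors is at most 2 -/
private lemma l1_le_two (α β : Fin m → ℝ) (hα0 : ∀ i, 0 ≤ α i) (hα1 : ∑ i, α i = 1)
    (hβ0 : ∀ i, 0 ≤ β i) (hβ1 : ∑ i, β i = 1) :
    ∑ j, |α j - β j| ≤ 2 := by
  calc ∑ j, |α j - β j| ≤ ∑ j, (α j + β j) := by
        refine Finset.sum_le_sum fun j _ => ?_
        rw [abs_sub_le_iff]
        constructor <;> nlinarith [hα0 j, hβ0 j]
    _ = 2 := by rw [Finset.sum_add_distrib, hα1, hβ1]; norm_num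

end Aux

set_option maxHeartbeats 1000000 in
/-- Doeblin condition implies a unique invariant probability measure and geometric
convergence in total variation. -/
theorem stmt2 {m : ℕ} (P : Matrix (Fin m) (Fin m) ℝ)
    (hP0 : ∀ i j, 0 ≤ P i j) (hP1 : ∀ i, ∑ j, P i j = 1)
    (n₀ : ℕ) (hn₀ : 0 < n₀) (κ : ℝ) (hκ : 0 < κ) (hκ1 : κ ≤ 1)
    (ν₀ : Fin m → ℝ) (hν₀0 : ∀ j, 0 ≤ ν₀ j) (hν₀1 : ∑ j, ν₀ j = 1)
    (hDoeblin : ∀ i j, κ * ν₀ j ≤ (P ^ n₀) i j) :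
    ∃ μ : Fin m → ℝ,
      (∀ i, 0 ≤ μ i) ∧ (∑ i, μ i = 1) ∧ Matrix.vecMul μ P = μ ∧
      (∀ μ' : Fin m → ℝ,
        (∀ i, 0 ≤ μ' i) → (∑ i, μ' i = 1) → Matrix.vecMul μ' P = μ' → μ' = μ) ∧
      ∀ ν : Fin m → ℝ, (∀ i, 0 ≤ ν i) → (∑ i, ν i = 1) →
        ∀ n : ℕ, (1 / 2) * ∑ j, |Matrix.vecMul ν (P ^ n) j - μ j| ≤ (1 - κ) ^ (n / n₀) := by
  set Q : Matrix (Fin m) (Fin m) ℝ := P ^ n₀ with hQdef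
  obtain ⟨hQ0, hQ1⟩ := pow_stoch P hP0 hP1 n₀
  -- uniqueness of Q-invariant probability vectors
  have uniqQ : ∀ α β : Fin m → ℝ, (∀ i, 0 ≤ α i) → (∑ i, α i = 1) →
      (∀ i, 0 ≤ β i) → (∑ i, β i = 1) →
      Matrix.vecMul α Q = α → Matrix.vecMul β Q = β → α = β := by
    intro α β hα0 hα1 hβ0 hβ1 hαQ hβQ
    have hδ : ∑ i, (α - β) i = 0 := by
      simp [Finset.sum_sub_distrib, hα1, hβ1]
    have h1 : Matrix.vecMul (α - β) Q = α - β := by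
      rw [Matrix.sub_vecMul, hαQ, hβQ]
    have h2 := contract Q hQ1 κ ν₀ hν₀1 hDoeblin (α - β) hδ
    rw [h1] at h2
    have h3 : ∑ i, |(α - β) i| = 0 := by
      have hnn : 0 ≤ ∑ i, |(α - β) i| := Finset.sum_nonneg fun i _ => abs_nonneg _
      nlinarith
    funext i
    have := (Finset.sum_eq_zero_iff_of_nonneg (fun i _ => abs_nonneg ((α - β) i))).1 h3 i
      (Finset.mem_univ i)
    have := abs_eq_zero.1 this
    have : α i - β i = 0 := this
    linarith
  -- the Cauchy sequence
  set x : ℕ → Fin m → ℝ := fun k => Matrix.vecMul ν₀ (Q ^ k) with hxdef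
  have hxprob : ∀ k, (∀ j, 0 ≤ x k j) ∧ ∑ j, x k j = 1 := by
    intro k
    obtain ⟨hk0, hk1⟩ := pow_stoch P hP0 hP1 (n₀ * k)
    have hQk : Q ^ k = P ^ (n₀ * k) := by rw [hQdef, ← pow_mul]
    exact vecMul_prob _ (hQk ▸ hk0) (hQk ▸ hk1) ν₀ hν₀0 hν₀1
  have hxsucc : ∀ k, x (k + 1) = Matrix.vecMul (x k) Q := by
    intro k
    simp only [hxdef]
    rw [Matrix.vecMul_vecMul, ← pow_succ]
  have hcauchy : CauchySeq x := by
    apply cauchySeq_of_le_geometric (1 - κ) 2 (by linarith)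
    intro k
    have hδsum : ∑ i, (x 1 - x 0) i = 0 := by
      simp [Finset.sum_sub_distrib, (hxprob 1).2, (hxprob 0).2]
    have hdiff : x (k + 1) - x k = Matrix.vecMul (x 1 - x 0) (Q ^ k) := by
      rw [Matrix.sub_vecMul]
      simp only [hxdef]
      rw [Matrix.vecMul_vecMul, Matrix.vecMul_vecMul, ← pow_add, ← pow_add,
        add_comm 1 k, zero_add]
    have hl1 : ∑ j, |(x (k + 1) - x k) j| ≤ (1 - κ) ^ k * 2 := by
      rw [hdiff]
      calc ∑ j, |Matrix.vecMul (x 1 - x 0) (Q ^ k) j|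
          ≤ (1 - κ) ^ k * ∑ i, |(x 1 - x 0) i| :=
            contract_pow Q hQ0 hQ1 κ hκ1 ν₀ hν₀1 hDoeblin _ hδsum k
        _ ≤ (1 - κ) ^ k * 2 := by
            have h2 : ∑ i, |(x 1 - x 0) i| ≤ 2 := by
              have := l1_le_two (x 1) (x 0) (hxprob 1).1 (hxprob 1).2 (hxprob 0).1 (hxprob 0).2
              simpa using this
            exact mul_le_mul_of_nonneg_left h2 (pow_nonneg (by linarith) k)
    rw [dist_pi_le_iff (mul_nonneg (by norm_num) (pow_nonneg (by linarith) k))]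
    intro j
    rw [Real.dist_eq]
    calc |x k j - x (k + 1) j| = |(x (k + 1) - x k) j| := by
          simp [abs_sub_comm]
      _ ≤ ∑ j', |(x (k + 1) - x k) j'| :=
          Finset.single_le_sum (f := fun j' => |(x (k + 1) - x k) j'|)
            (fun j' _ => abs_nonneg _) (Finset.mem_univ j)
      _ ≤ (1 - κ) ^ k * 2 := hl1
      _ = 2 * (1 - κ) ^ k := by ring
  obtain ⟨μ, hμlim⟩ := cauchySeq_tendsto_of_complete hcauchy
  have hcoord : ∀ j, Tendsto (fun k => x k j) atTop (nhds (μ j)) := tendsto_pi_nhds.1 hμlim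
  -- μ is a probability vector
  have hμ0 : ∀ j, 0 ≤ μ j := fun j =>
    ge_of_tendsto' (hcoord j) fun k => (hxprob k).1 j
  have hμ1 : ∑ j, μ j = 1 := by
    have h1 : Tendsto (fun k => ∑ j, x k j) atTop (nhds (∑ j, μ j)) :=
      tendsto_finset_sum _ fun j _ => hcoord j
    have h2 : Tendsto (fun k => ∑ j, x k j) atTop (nhds 1) := by
      simp only [fun k => (hxprob k).2]; exact tendsto_const_nhds
    exact tendsto_nhds_unique h1 h2
  -- μ is Q-invariant
  have hμQ : Matrix.vecMul μ Q = μ := by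
    funext j
    have h1 : Tendsto (fun k => Matrix.vecMul (x k) Q j) atTop (nhds (Matrix.vecMul μ Q j)) := by
      simp only [vecMul_apply']
      exact tendsto_finset_sum _ fun i _ => (hcoord i).mul tendsto_const_nhds
    have h2 : Tendsto (fun k => Matrix.vecMul (x k) Q j) atTop (nhds (μ j)) := by
      have : (fun k => Matrix.vecMul (x k) Q j) = fun k => x (k + 1) j := by
        funext k; rw [hxsucc k]
      rw [this]
      exact (hcoord j).comp (tendsto_add_atTop_nat 1)
    exact tendsto_nhds_unique h1 h2
  -- μ is P-invariant
  have hμP : Matrix.vecMul μ P = μ := by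
    have hcomm : P * Q = Q * P := by
      rw [hQdef, ← pow_succ, ← pow_succ']
    obtain ⟨hμP0, hμP1⟩ := vecMul_prob P hP0 hP1 μ hμ0 hμ1
    have hinv : Matrix.vecMul (Matrix.vecMul μ P) Q = Matrix.vecMul μ P := by
      rw [Matrix.vecMul_vecMul, hcomm, ← Matrix.vecMul_vecMul, hμQ]
    exact uniqQ _ _ hμP0 hμP1 hμ0 hμ1 hinv hμQ
  -- invariance under powers
  have hμpow : ∀ q, Matrix.vecMul μ (Q ^ q) = μ := by
    intro q
    induction q with
    | zero => simp [Matrix.vecMul_one]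
    | succ q ih => rw [pow_succ, ← Matrix.vecMul_vecMul, ih, hμQ]
  refine ⟨μ, hμ0, hμ1, hμP, ?_, ?_⟩
  · -- uniqueness
    intro μ' hμ'0 hμ'1 hμ'P
    have hμ'pow : ∀ q, Matrix.vecMul μ' (P ^ q) = μ' := by
      intro q
      induction q with
      | zero => simp [Matrix.vecMul_one]
      | succ q ih => rw [pow_succ, ← Matrix.vecMul_vecMul, ih, hμ'P]
    exact uniqQ μ' μ hμ'0 hμ'1 hμ0 hμ1 (hμ'pow n₀) hμQ
  · -- convergence bound
    intro ν hν0 hν1 n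
    obtain ⟨hr0, hr1⟩ := pow_stoch P hP0 hP1 (n % n₀)
    obtain ⟨hνr0, hνr1⟩ := vecMul_prob _ hr0 hr1 ν hν0 hν1
    have hδsum : ∑ i, (Matrix.vecMul ν (P ^ (n % n₀)) - μ) i = 0 := by
      simp [Finset.sum_sub_distrib, hνr1, hμ1]
    have hsplit : Matrix.vecMul (Matrix.vecMul ν (P ^ (n % n₀)) - μ) (Q ^ (n / n₀))
        = Matrix.vecMul ν (P ^ n) - μ := by
      rw [Matrix.sub_vecMul, hμpow, Matrix.vecMul_vecMul, hQdef, ← pow_mul, ← pow_add,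
        Nat.mod_add_div]
    have hbound := contract_pow Q hQ0 hQ1 κ hκ1 ν₀ hν₀1 hDoeblin _ hδsum (n / n₀)
    rw [hsplit] at hbound
    have hl2 : ∑ i, |(Matrix.vecMul ν (P ^ (n % n₀)) - μ) i| ≤ 2 := by
      have := l1_le_two (Matrix.vecMul ν (P ^ (n % n₀))) μ hνr0 hνr1 hμ0 hμ1
      simpa using this
    have hfinal : ∑ j, |Matrix.vecMul ν (P ^ n) j - μ j| ≤ (1 - κ) ^ (n / n₀) * 2 := by
      calc ∑ j, |Matrix.vecMul ν (P ^ n) j - μ j|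
          = ∑ j, |(Matrix.vecMul ν (P ^ n) - μ) j| := by simp
        _ ≤ (1 - κ) ^ (n / n₀) * ∑ i, |(Matrix.vecMul ν (P ^ (n % n₀)) - μ) i| := hbound
        _ ≤ (1 - κ) ^ (n / n₀) * 2 :=
            mul_le_mul_of_nonneg_left hl2 (pow_nonneg (by linarith) (n / n₀))
    linarith
end

section
/- Let P be an m×m stochastic matrix satisfying the Doeblin condition P^{n₀}(i,j) ≥ κ ν₀(j). If ν is a signed measure on {1,…,m} with total mass zero, i.e. Σ_i ν(i) = 0, then for all n ≥ 0, Σ_j |(ν P^n)(j)| ≤ (1−κ)^{⌊n/n₀⌋} Σ_i |ν(i)|. -/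
open Finset

lemma aux_pow_nonneg {m : ℕ} (P : Matrix (Fin m) (Fin m) ℝ)
    (hP0 : ∀ i j, 0 ≤ P i j) : ∀ n i j, 0 ≤ (P ^ n) i j := by
  intro n
  induction n with
  | zero =>
    intro i j
    simp [Matrix.one_apply]
    split <;> norm_num
  | succ k ih =>
    intro i j
    rw [pow_succ, Matrix.mul_apply]
    exact Finset.sum_nonneg fun l _ => mul_nonneg (ih i l) (hP0 l j)

lemma aux_pow_rowsum {m : ℕ} (P : Matrix (Fin m) (Fin m) ℝ)
    (hP1 : ∀ i, ∑ j, P i j = 1) : ∀ n i, ∑ j, (P ^ n) i j = 1 := by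
  intro n
  induction n with
  | zero =>
    intro i
    simp [Matrix.one_apply]
  | succ k ih =>
    intro i
    rw [pow_succ]
    simp only [Matrix.mul_apply]
    rw [Finset.sum_comm]
    have h : ∀ l, ∑ j, (P ^ k) i l * P l j = (P ^ k) i l := by
      intro l; rw [← Finset.mul_sum, hP1 l, mul_one]
    rw [Finset.sum_congr rfl fun l _ => h l]
    exact ih i

/-- l1 contraction by a row-stochastic matrix. -/
lemma aux_l1 {m : ℕ} (Q : Matrix (Fin m) (Fin m) ℝ)
    (hQ0 : ∀ i j, 0 ≤ Q i j) (hQ1 : ∀ i, ∑ j, Q i j = 1)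
    (ν : Fin m → ℝ) : ∑ j, |Matrix.vecMul ν Q j| ≤ ∑ i, |ν i| := by
  have h : ∀ j, |Matrix.vecMul ν Q j| ≤ ∑ i, |ν i| * Q i j := by
    intro j
    rw [Matrix.vecMul, dotProduct]
    calc |∑ i, ν i * Q i j| ≤ ∑ i, |ν i * Q i j| := Finset.abs_sum_le_sum_abs _ _
      _ = ∑ i, |ν i| * Q i j := by
          apply Finset.sum_congr rfl; intro i _
          rw [abs_mul, abs_of_nonneg (hQ0 i j)]
  calc ∑ j, |Matrix.vecMul ν Q j| ≤ ∑ j, ∑ i, |ν i| * Q i j :=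
        Finset.sum_le_sum fun j _ => h j
    _ = ∑ i, |ν i| * ∑ j, Q i j := by rw [Finset.sum_comm]; simp [Finset.mul_sum]
    _ = ∑ i, |ν i| := by simp [hQ1]

/-- mass preservation. -/
lemma aux_mass {m : ℕ} (Q : Matrix (Fin m) (Fin m) ℝ)
    (hQ1 : ∀ i, ∑ j, Q i j = 1)
    (ν : Fin m → ℝ) : ∑ j, Matrix.vecMul ν Q j = ∑ i, ν i := by
  simp only [Matrix.vecMul, dotProduct]
  rw [Finset.sum_comm]
  simp_rw [← Finset.mul_sum]
  apply Finset.sum_congr rfl; intro i _; rw [hQ1 i, mul_one]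

/-- Doeblin contraction step. -/
lemma aux_doeblin {m : ℕ} (Q : Matrix (Fin m) (Fin m) ℝ)
    (hQ1 : ∀ i, ∑ j, Q i j = 1) (κ : ℝ)
    (ν₀ : Fin m → ℝ) (hν₀1 : ∑ j, ν₀ j = 1)
    (hD : ∀ i j, κ * ν₀ j ≤ Q i j)
    (ν : Fin m → ℝ) (hν : ∑ i, ν i = 0) :
    ∑ j, |Matrix.vecMul ν Q j| ≤ (1 - κ) * ∑ i, |ν i| := by
  have key : ∀ j, Matrix.vecMul ν Q j = ∑ i, ν i * (Q i j - κ * ν₀ j) := by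
    intro j
    have h2 : ∑ i, ν i * (Q i j - κ * ν₀ j)
        = (∑ i, ν i * Q i j) - (∑ i, ν i) * (κ * ν₀ j) := by
      rw [Finset.sum_mul, ← Finset.sum_sub_distrib]
      exact Finset.sum_congr rfl fun i _ => by ring
    rw [h2, hν, zero_mul, sub_zero, Matrix.vecMul, dotProduct]
  have habs : ∀ j, |Matrix.vecMul ν Q j| ≤ ∑ i, |ν i| * (Q i j - κ * ν₀ j) := by
    intro j
    rw [key j]
    calc |∑ i, ν i * (Q i j - κ * ν₀ j)| ≤ ∑ i, |ν i * (Q i j - κ * ν₀ j)| :=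
          Finset.abs_sum_le_sum_abs _ _
      _ = ∑ i, |ν i| * (Q i j - κ * ν₀ j) := by
          apply Finset.sum_congr rfl; intro i _
          have hnn : (0:ℝ) ≤ Q i j - κ * ν₀ j := by linarith [hD i j]
          rw [abs_mul, abs_of_nonneg hnn]
  calc ∑ j, |Matrix.vecMul ν Q j| ≤ ∑ j, ∑ i, |ν i| * (Q i j - κ * ν₀ j) :=
        Finset.sum_le_sum fun j _ => habs j
    _ = ∑ i, ∑ j, |ν i| * (Q i j - κ * ν₀ j) := Finset.sum_comm
    _ = ∑ i, |ν i| * ∑ j, (Q i j - κ * ν₀ j) := by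
        exact Finset.sum_congr rfl fun i _ => (Finset.mul_sum _ _ _).symm
    _ = ∑ i, |ν i| * (1 - κ) := by
        apply Finset.sum_congr rfl; intro i _
        rw [Finset.sum_sub_distrib, hQ1 i, ← Finset.mul_sum, hν₀1, mul_one]
    _ = (1 - κ) * ∑ i, |ν i| := by rw [Finset.mul_sum]; exact Finset.sum_congr rfl fun i _ => mul_comm _ _

/-- Under the Doeblin condition, a signed measure of total mass zero contracts
geometrically under the action of the transition matrix. -/
theorem stmt3 {m : ℕ} (P : Matrix (Fin m) (Fin m) ℝ)
    (hP0 : ∀ i j, 0 ≤ P i j) (hP1 : ∀ i, ∑ j, P i j = 1)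
    (n₀ : ℕ) (hn₀ : 0 < n₀) (κ : ℝ) (hκ : 0 < κ) (hκ1 : κ ≤ 1)
    (ν₀ : Fin m → ℝ) (hν₀0 : ∀ j, 0 ≤ ν₀ j) (hν₀1 : ∑ j, ν₀ j = 1)
    (hDoeblin : ∀ i j, κ * ν₀ j ≤ (P ^ n₀) i j)
    (ν : Fin m → ℝ) (hν : ∑ i, ν i = 0) :
    ∀ n : ℕ, ∑ j, |Matrix.vecMul ν (P ^ n) j| ≤ (1 - κ) ^ (n / n₀) * ∑ i, |ν i| := by
  have hpow0 := aux_pow_nonneg P hP0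
  have hpow1 := aux_pow_rowsum P hP1
  have h1κ : (0:ℝ) ≤ 1 - κ := by linarith
  suffices H : ∀ n : ℕ, ∀ μ : Fin m → ℝ, ∑ i, μ i = 0 →
      ∑ j, |Matrix.vecMul μ (P ^ n) j| ≤ (1 - κ) ^ (n / n₀) * ∑ i, |μ i| by
    intro n; exact H n ν hν
  intro n
  induction n using Nat.strong_induction_on with
  | _ n ih =>
    intro μ hμ
    by_cases hlt : n < n₀
    · rw [Nat.div_eq_of_lt hlt, pow_zero, one_mul]
      exact aux_l1 (P ^ n) (hpow0 n) (hpow1 n) μ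
    · push_neg at hlt
      set k := n - n₀ with hk
      have hn : n = n₀ + k := by omega
      have hdiv : n / n₀ = k / n₀ + 1 := by
        rw [hn, add_comm, Nat.add_div_right k hn₀]
      set μ' := Matrix.vecMul μ (P ^ n₀) with hμ'
      have hμ'0 : ∑ i, μ' i = 0 := by
        rw [hμ', aux_mass _ (hpow1 n₀), hμ]
      have hstep : ∑ i, |μ' i| ≤ (1 - κ) * ∑ i, |μ i| :=
        aux_doeblin (P ^ n₀) (hpow1 n₀) κ ν₀ hν₀1 hDoeblin μ hμ
      have hkey : Matrix.vecMul μ (P ^ n) = Matrix.vecMul μ' (P ^ k) := by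
        rw [hμ', Matrix.vecMul_vecMul, ← pow_add, ← hn]
      rw [hkey]
      calc ∑ j, |Matrix.vecMul μ' (P ^ k) j| ≤ (1 - κ) ^ (k / n₀) * ∑ i, |μ' i| :=
            ih k (by omega) μ' hμ'0
        _ ≤ (1 - κ) ^ (k / n₀) * ((1 - κ) * ∑ i, |μ i|) := by
            apply mul_le_mul_of_nonneg_left hstep (pow_nonneg h1κ _)
        _ = (1 - κ) ^ (n / n₀) * ∑ i, |μ i| := by
            rw [hdiv, pow_succ]; ring
end

section
/- Let θ ↦ P_θ be a C¹-smooth family of m×m stochastic matrices satisfying the uniform Doeblin condition P_θ^{n₀}(i,j) ≥ κ ν₀(j), with unique invariant probability μ_θ. Then θ ↦ μ_θ is differentiable and ∂_{θ_l} μ_θ = Σ_{k=0}^∞ (μ_θ · ∂_{θ_l}P_θ) · P_θ^k, where the series converges geometrically: ‖(μ_θ ∂_{θ_l}P_θ) P_θ^k‖_tv ≤ (1/2) max_i Σ_j |∂_{θ_l}p_{ij}(θ)| (1−κ)^{⌊k/n₀⌋}. -/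
/-!
Adding the all-ones matrix to `1 - P_θ` gives a matrix `A_θ` with `μ_θ A_θ = 1`, which is
invertible under the Doeblin condition: a zero-sum vector fixed by `P_θ` is also fixed by every
`P_θ ^ k`, while `P_θ ^ n₀` contracts the `ℓ¹` norm of zero-sum vectors by the factor `1 - κ`.
Comparing `μ_θ' A_θ' = 1 = μ_θ A_θ` gives `μ_θ' - μ_θ = μ_θ' (P_θ' - P_θ) A_θ⁻¹`; as `μ` is
continuous (Cramer's rule), this differentiates to `v A_θ⁻¹` with `v = μ_θ ∂P_θ`. The vector `v`
sums to zero and `A_θ` acts as `1 - P_θ` on such vectors, so `v A_θ⁻¹ = ∑ₖ v P_θ ^ k`, the series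
converging geometrically by the same contraction.
-/

open Finset Matrix Filter Topology Asymptotics

theorem summable_pow_div {r : ℝ} (h0 : 0 ≤ r) (h1 : r < 1) {n : ℕ} (hn : 0 < n) :
    Summable fun k : ℕ => r ^ (k / n) := by
  have : NeZero n := ⟨hn.ne'⟩
  have hprod : Summable fun p : ℕ × Fin n => r ^ p.1 * 1 :=
    summable_mul_of_summable_norm (f := fun q : ℕ => r ^ q) (g := fun _ : Fin n => (1 : ℝ))
      (by simpa [abs_of_nonneg h0] using summable_geometric_of_lt_one h0 h1) Summable.of_finite
  exact (Nat.divModEquiv n).summable_iff.2 (by simpa using hprod)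

theorem HasFDerivAt.mul_of_continuousAt_of_eq_zero {𝕜 E : Type*} [NontriviallyNormedField 𝕜]
    [NormedAddCommGroup E] [NormedSpace 𝕜 E] {a b : E → 𝕜} {b' : E →L[𝕜] 𝕜} {x : E}
    (hb : HasFDerivAt b b' x) (ha : ContinuousAt a x) (hb0 : b x = 0) :
    HasFDerivAt (fun y => a y * b y) (a x • b') x := by
  rw [hasFDerivAt_iff_isLittleO]
  have h₁ : (fun y => a y * (b y - b x - b' (y - x))) =o[𝓝 x] fun y => (1 : ℝ) * ‖y - x‖ :=
    ha.tendsto.isBigO_one ℝ |>.mul_isLittleO hb.isLittleO.norm_right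
  have h₂ : (fun y => (a y - a x) * b' (y - x)) =o[𝓝 x] fun y => (1 : ℝ) * ‖y - x‖ :=
    (isLittleO_one_iff ℝ).2 (by simpa using ha.tendsto.sub_const (a x)) |>.mul_isBigO
      (b'.isBigO_sub _ x).norm_right
  refine ((h₁.add h₂).congr_left fun y => ?_).trans_isBigO (by simpa using isBigO_refl _ _)
  simp only [FunLike.coe_smul, Pi.smul_apply, smul_eq_mul, hb0]
  ring

theorem sum_fderiv_eq_zero_of_sum_const {ι E : Type*} [Fintype ι] [NormedAddCommGroup E]
    [NormedSpace ℝ E] {f : ι → E → ℝ} {f' : ι → E →L[ℝ] ℝ} {θ : E} {c : ℝ}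
    (hf : ∀ j, HasFDerivAt (f j) (f' j) θ) (hc : ∀ θ', ∑ j, f j θ' = c) : ∑ j, f' j = 0 := by
  have hsum := HasFDerivAt.fun_sum (u := univ) fun j _ => hf j
  simp only [hc] at hsum
  exact hsum.unique (hasFDerivAt_const c θ)

namespace Matrix

variable {ι : Type*} [Fintype ι]

theorem sum_vecMul_of_mulVec_one {Q : Matrix ι ι ℝ} (hQ : Q *ᵥ 1 = 1) (x : ι → ℝ) :
    ∑ j, (x ᵥ* Q) j = ∑ i, x i := by
  rw [← dotProduct_one, ← dotProduct_one, ← dotProduct_mulVec, hQ]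

theorem sum_abs_vecMul_le_iSup {μ : ι → ℝ} (hμ0 : ∀ i, 0 ≤ μ i) (hμ1 : ∑ i, μ i = 1)
    (D : Matrix ι ι ℝ) : ∑ j, |(μ ᵥ* D) j| ≤ ⨆ i, ∑ j, |D i j| :=
  calc ∑ j, |(μ ᵥ* D) j| ≤ ∑ j, ∑ i, μ i * |D i j| :=
        sum_le_sum fun j _ => (abs_sum_le_sum_abs _ _).trans_eq <| sum_congr rfl fun i _ => by
          rw [abs_mul, abs_of_nonneg (hμ0 i)]
    _ = ∑ i, μ i * ∑ j, |D i j| := by rw [sum_comm]; simp only [mul_sum]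
    _ ≤ ∑ i, μ i * ⨆ i, ∑ j, |D i j| := sum_le_sum fun i _ =>
        mul_le_mul_of_nonneg_left
          (le_ciSup (f := fun i => ∑ j, |D i j|) (Set.finite_range _).bddAbove i) (hμ0 i)
    _ = ⨆ i, ∑ j, |D i j| := by rw [← sum_mul, hμ1, one_mul]

/-- Subtracting the common mass `κ ν` from every row leaves nonnegative rows of mass `1 - κ`,
and does not change `x ᵥ* Q` when `x` sums to zero. -/
theorem sum_abs_vecMul_le_of_minorization {Q : Matrix ι ι ℝ} (hQ : Q *ᵥ 1 = 1) {κ : ℝ}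
    {ν : ι → ℝ} (hν : ∑ j, ν j = 1) (hD : ∀ i j, κ * ν j ≤ Q i j) {x : ι → ℝ}
    (hx : ∑ i, x i = 0) : ∑ j, |(x ᵥ* Q) j| ≤ (1 - κ) * ∑ i, |x i| := by
  have hshift : ∀ j, (x ᵥ* Q) j = ∑ i, x i * (Q i j - κ * ν j) := fun j => by
    simp only [vecMul, dotProduct, mul_sub, sum_sub_distrib, ← sum_mul, hx, zero_mul, sub_zero]
  have hrow : ∀ i, ∑ j, Q i j = 1 := fun i => by simpa [mulVec, dotProduct] using congrFun hQ i
  calc ∑ j, |(x ᵥ* Q) j| ≤ ∑ j, ∑ i, |x i| * (Q i j - κ * ν j) :=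
        sum_le_sum fun j _ => (hshift j ▸ abs_sum_le_sum_abs _ _).trans_eq <|
          sum_congr rfl fun i _ => by rw [abs_mul, abs_of_nonneg (sub_nonneg.2 (hD i j))]
    _ = (1 - κ) * ∑ i, |x i| := by
        rw [sum_comm, mul_sum]
        simp only [← mul_sum, sum_sub_distrib, hrow, hν, mul_one, mul_comm]

variable [DecidableEq ι]

theorem sum_abs_vecMul_le {Q : Matrix ι ι ℝ} (hQ : Q ∈ rowStochastic ℝ ι) (x : ι → ℝ) :
    ∑ j, |(x ᵥ* Q) j| ≤ ∑ i, |x i| :=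
  calc ∑ j, |(x ᵥ* Q) j| ≤ ∑ j, ∑ i, |x i| * Q i j :=
        sum_le_sum fun j _ => (abs_sum_le_sum_abs _ _).trans_eq <| sum_congr rfl fun i _ => by
          rw [abs_mul, abs_of_nonneg (hQ.1 i j)]
    _ = ∑ i, |x i| := by
        rw [sum_comm]
        simp only [← mul_sum, sum_row_of_mem_rowStochastic hQ, mul_one]

theorem sum_abs_vecMul_pow_le_of_minorization {Q : Matrix ι ι ℝ} (hQ : Q *ᵥ 1 = 1) {κ : ℝ}
    (hκ : κ ≤ 1) {ν : ι → ℝ} (hν : ∑ j, ν j = 1) (hD : ∀ i j, κ * ν j ≤ Q i j) {x : ι → ℝ}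
    (hx : ∑ i, x i = 0) (q : ℕ) : ∑ j, |(x ᵥ* Q ^ q) j| ≤ (1 - κ) ^ q * ∑ i, |x i| := by
  induction q generalizing x with
  | zero => simp
  | succ q ih =>
    calc ∑ j, |(x ᵥ* Q ^ (q + 1)) j| ≤ (1 - κ) ^ q * ∑ i, |(x ᵥ* Q) i| := by
          rw [pow_succ', ← vecMul_vecMul]
          exact ih (by rw [sum_vecMul_of_mulVec_one hQ, hx])
      _ ≤ (1 - κ) ^ q * ((1 - κ) * ∑ i, |x i|) := by
          have := sum_abs_vecMul_le_of_minorization hQ hν hD hx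
          gcongr
      _ = (1 - κ) ^ (q + 1) * ∑ i, |x i| := by ring

theorem sum_abs_vecMul_pow_le {Q : Matrix ι ι ℝ} (hQ : Q ∈ rowStochastic ℝ ι) {κ : ℝ}
    (hκ : κ ≤ 1) {ν : ι → ℝ} (hν : ∑ j, ν j = 1) {n : ℕ} (hD : ∀ i j, κ * ν j ≤ (Q ^ n) i j)
    {x : ι → ℝ} (hx : ∑ i, x i = 0) (k : ℕ) :
    ∑ j, |(x ᵥ* Q ^ k) j| ≤ (1 - κ) ^ (k / n) * ∑ i, |x i| := by
  conv_lhs => rw [← Nat.div_add_mod k n, pow_add, pow_mul, ← vecMul_vecMul]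
  exact (sum_abs_vecMul_le (pow_mem hQ _) _).trans
    (sum_abs_vecMul_pow_le_of_minorization (pow_mem hQ n).2 hκ hν hD hx _)

/-- `1 - Q` corrected by the all-ones matrix. It agrees with `1 - Q` on vectors summing to zero,
sends invariant probability vectors to the all-ones vector, and is invertible under a Doeblin
condition, so that it recovers the invariant vector as `1 ᵥ* (shiftedGenerator Q)⁻¹`. -/
def shiftedGenerator (Q : Matrix ι ι ℝ) : Matrix ι ι ℝ := 1 - Q + of fun _ _ => 1

theorem vecMul_shiftedGenerator (Q : Matrix ι ι ℝ) (x : ι → ℝ) :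
    x ᵥ* shiftedGenerator Q = x - x ᵥ* Q + fun _ => ∑ i, x i := by
  rw [shiftedGenerator, vecMul_add, vecMul_sub, vecMul_one]
  ext j
  simp [vecMul, dotProduct]

theorem vecMul_shiftedGenerator_of_sum_eq_zero (Q : Matrix ι ι ℝ) {x : ι → ℝ}
    (hx : ∑ i, x i = 0) : x ᵥ* shiftedGenerator Q = x - x ᵥ* Q := by
  ext j
  simp [vecMul_shiftedGenerator, hx]

theorem vecMul_shiftedGenerator_eq_one {Q : Matrix ι ι ℝ} {μ : ι → ℝ} (hμ : μ ᵥ* Q = μ)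
    (hμ1 : ∑ i, μ i = 1) : μ ᵥ* shiftedGenerator Q = 1 := by
  ext j
  simp [vecMul_shiftedGenerator, hμ, hμ1]

theorem sum_eq_zero_of_sum_vecMul_shiftedGenerator_eq_zero {Q : Matrix ι ι ℝ} (hQ : Q *ᵥ 1 = 1)
    {x : ι → ℝ} (hx : ∑ j, (x ᵥ* shiftedGenerator Q) j = 0) : ∑ i, x i = 0 := by
  rw [vecMul_shiftedGenerator] at hx
  simp only [Pi.add_apply, Pi.sub_apply, sum_add_distrib, sum_sub_distrib,
    sum_vecMul_of_mulVec_one hQ, sub_self, zero_add, sum_const, card_univ, nsmul_eq_mul] at hx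
  rcases mul_eq_zero.1 hx with hcard | hsum
  · have : IsEmpty ι := Fintype.card_eq_zero_iff.1 (by exact_mod_cast hcard)
    simp
  · exact hsum

theorem eq_one_vecMul_inv_shiftedGenerator {Q : Matrix ι ι ℝ}
    (hQ : IsUnit (shiftedGenerator Q).det) {μ : ι → ℝ} (hμ : μ ᵥ* shiftedGenerator Q = 1) :
    μ = 1 ᵥ* (shiftedGenerator Q)⁻¹ := by
  rw [← hμ, vecMul_vecMul, mul_nonsing_inv _ hQ, vecMul_one]

theorem sub_eq_vecMul_sub_vecMul_inv_shiftedGenerator {Q R : Matrix ι ι ℝ}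
    (hQ : IsUnit (shiftedGenerator Q).det) {μ ν : ι → ℝ} (hμ : μ ᵥ* shiftedGenerator Q = 1)
    (hν : ν ᵥ* shiftedGenerator R = 1) :
    ν - μ = ν ᵥ* (R - Q) ᵥ* (shiftedGenerator Q)⁻¹ := by
  have h : (ν - μ) ᵥ* shiftedGenerator Q = ν ᵥ* (R - Q) := by
    rw [sub_vecMul, hμ, ← hν, ← vecMul_sub, shiftedGenerator, shiftedGenerator]
    congr 1
    abel
  rw [← h, vecMul_vecMul, mul_nonsing_inv _ hQ, vecMul_one]

section Doeblin

variable {Q : Matrix ι ι ℝ} (hQ : Q ∈ rowStochastic ℝ ι) {κ : ℝ} (hκ0 : 0 < κ) (hκ1 : κ ≤ 1)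
  {ν : ι → ℝ} (hν : ∑ j, ν j = 1) {n : ℕ} (hn : 0 < n) (hD : ∀ i j, κ * ν j ≤ (Q ^ n) i j)
include hQ hκ1 hν hD

theorem abs_vecMul_pow_apply_le {x : ι → ℝ} (hx : ∑ i, x i = 0) (k : ℕ) (j : ι) :
    |(x ᵥ* Q ^ k) j| ≤ (1 - κ) ^ (k / n) * ∑ i, |x i| :=
  (single_le_sum (f := fun j => |(x ᵥ* Q ^ k) j|) (fun _ _ => abs_nonneg _) (mem_univ j)).trans
    (sum_abs_vecMul_pow_le hQ hκ1 hν hD hx k)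

include hκ0 hn

theorem tendsto_vecMul_pow_nhds_zero {x : ι → ℝ} (hx : ∑ i, x i = 0) :
    Tendsto (fun k => x ᵥ* Q ^ k) atTop (𝓝 0) := by
  have hr : Tendsto (fun k : ℕ => (1 - κ) ^ (k / n) * ∑ i, |x i|) atTop (𝓝 0) := by
    simpa using ((tendsto_pow_atTop_nhds_zero_of_lt_one (by linarith) (by linarith)).comp
      (Nat.tendsto_div_const_atTop hn.ne')).mul_const (∑ i, |x i|)
  exact tendsto_pi_nhds.2 fun j =>
    squeeze_zero_norm (fun k => abs_vecMul_pow_apply_le hQ hκ1 hν hD hx k j) hr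

theorem summable_vecMul_pow {x : ι → ℝ} (hx : ∑ i, x i = 0) :
    Summable fun k => x ᵥ* Q ^ k :=
  Pi.summable.2 fun j => Summable.of_norm_bounded
    ((summable_pow_div (by linarith) (by linarith) hn).mul_right (∑ i, |x i|))
    fun k => abs_vecMul_pow_apply_le hQ hκ1 hν hD hx k j

theorem isUnit_det_shiftedGenerator : IsUnit (shiftedGenerator Q).det := by
  rw [isUnit_iff_ne_zero, Ne, ← exists_vecMul_eq_zero_iff]
  rintro ⟨x, hx0, hxA⟩
  have hsum : ∑ i, x i = 0 :=
    sum_eq_zero_of_sum_vecMul_shiftedGenerator_eq_zero hQ.2 (by simp [hxA])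
  have hfix : x ᵥ* Q = x := by
    rw [vecMul_shiftedGenerator_of_sum_eq_zero Q hsum, sub_eq_zero] at hxA
    exact hxA.symm
  have hfix_pow : ∀ k, x ᵥ* Q ^ k = x := fun k => by
    induction k with
    | zero => simp
    | succ k ih => rw [pow_succ, ← vecMul_vecMul, ih, hfix]
  have hlim := tendsto_vecMul_pow_nhds_zero hQ hκ0 hκ1 hν hn hD hsum
  simp only [hfix_pow] at hlim
  exact hx0 (tendsto_nhds_unique tendsto_const_nhds hlim)

theorem hasSum_vecMul_pow {v : ι → ℝ} (hv : ∑ i, v i = 0) :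
    HasSum (fun k => v ᵥ* Q ^ k) (v ᵥ* (shiftedGenerator Q)⁻¹) := by
  set w := v ᵥ* (shiftedGenerator Q)⁻¹
  have hwA : w ᵥ* shiftedGenerator Q = v := by
    rw [vecMul_vecMul, nonsing_inv_mul _ (isUnit_det_shiftedGenerator hQ hκ0 hκ1 hν hn hD),
      vecMul_one]
  have hw : ∑ i, w i = 0 :=
    sum_eq_zero_of_sum_vecMul_shiftedGenerator_eq_zero hQ.2 (by rw [hwA, hv])
  have hvw : ∀ k, v ᵥ* Q ^ k = w ᵥ* Q ^ k - w ᵥ* Q ^ (k + 1) := fun k => by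
    conv_lhs => rw [← hwA, vecMul_shiftedGenerator_of_sum_eq_zero Q hw, sub_vecMul,
      vecMul_vecMul w Q, ← pow_succ']
  rw [(summable_vecMul_pow hQ hκ0 hκ1 hν hn hD hv).hasSum_iff_tendsto_nat]
  simp only [hvw, sum_range_sub', pow_zero, vecMul_one]
  simpa using tendsto_const_nhds.sub (tendsto_vecMul_pow_nhds_zero hQ hκ0 hκ1 hν hn hD hw)

end Doeblin

theorem continuousAt_of_vecMul_shiftedGenerator_eq_one {X : Type*} [TopologicalSpace X]
    {P : X → Matrix ι ι ℝ} {μ : X → ι → ℝ} (hA : ∀ x, IsUnit (shiftedGenerator (P x)).det)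
    (hμ : ∀ x, μ x ᵥ* shiftedGenerator (P x) = 1) {x : X} (hP : ContinuousAt P x) :
    ContinuousAt μ x := by
  obtain ⟨u, hu⟩ := hA x
  have hinv : ContinuousAt (fun y => (shiftedGenerator (P y))⁻¹) x :=
    (continuousAt_matrix_inv _ (hu ▸ NormedRing.inverse_continuousAt u)).comp
      ((continuousAt_const.sub hP).add continuousAt_const)
  rw [show μ = _ from funext fun y => eq_one_vecMul_inv_shiftedGenerator (hA y) (hμ y)]
  exact (continuous_const.matrix_vecMul continuous_id).continuousAt.comp hinv

section Derivative

variable {E : Type*} [NormedAddCommGroup E] [NormedSpace ℝ E] {P : E → Matrix ι ι ℝ}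
  {μ : E → ι → ℝ} (hA : ∀ θ, IsUnit (shiftedGenerator (P θ)).det)
  (hμ : ∀ θ, μ θ ᵥ* shiftedGenerator (P θ) = 1) {P' : ι → ι → E →L[ℝ] ℝ} {θ : E}
  (hP : ∀ i j, HasFDerivAt (fun θ' => P θ' i j) (P' i j) θ)
include hA hμ hP

theorem hasFDerivAt_of_vecMul_shiftedGenerator_eq_one (j : ι) :
    HasFDerivAt (fun θ' => μ θ' j)
      (∑ i, ∑ k, (μ θ i * (shiftedGenerator (P θ))⁻¹ k j) • P' i k) θ := by
  set Z := (shiftedGenerator (P θ))⁻¹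
  have hμc : ContinuousAt μ θ := continuousAt_of_vecMul_shiftedGenerator_eq_one hA hμ
    (continuousAt_pi.2 fun i => continuousAt_pi.2 fun k => (hP i k).continuousAt)
  have hterm : ∀ i k, HasFDerivAt (fun θ' => μ θ' i * (P θ' i k - P θ i k) * Z k j)
      ((μ θ i * Z k j) • P' i k) θ := fun i k => by
    have := ((hP i k).sub_const (P θ i k)).mul_of_continuousAt_of_eq_zero
      ((continuous_apply i).continuousAt.comp hμc) (sub_self _) |>.mul_const (Z k j)
    exact this.congr_fderiv (by simp only [smul_smul, Function.comp_apply, mul_comm])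
  have hsum := (HasFDerivAt.fun_sum (u := univ) fun i _ =>
    HasFDerivAt.fun_sum (u := univ) fun k _ => hterm i k).const_add (μ θ j)
  refine hsum.congr_of_eventuallyEq (Eventually.of_forall fun θ' => ?_)
  have hdiff : μ θ' - μ θ = μ θ' ᵥ* (P θ' - P θ) ᵥ* Z :=
    sub_eq_vecMul_sub_vecMul_inv_shiftedGenerator (hA θ) (hμ θ) (hμ θ')
  have := congrFun hdiff j
  simp only [Pi.sub_apply, vecMul, dotProduct, sum_mul] at this
  rw [← sub_eq_iff_eq_add', this, sum_comm]
  simp only [sub_apply, mul_sub]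

theorem hasLineDerivAt_of_vecMul_shiftedGenerator_eq_one (v : E) :
    HasLineDerivAt ℝ μ (μ θ ᵥ* of (fun i j => P' i j v) ᵥ* (shiftedGenerator (P θ))⁻¹) θ v :=
  hasDerivAt_pi.2 fun j =>
    ((hasFDerivAt_of_vecMul_shiftedGenerator_eq_one hA hμ hP j).hasLineDerivAt v).congr_deriv <| by
      simp only [_root_.sum_apply, FunLike.coe_smul, Pi.smul_apply, smul_eq_mul,
        vecMul, dotProduct, of_apply, sum_mul]
      rw [sum_comm]
      exact sum_congr rfl fun _ _ => sum_congr rfl fun _ _ => by ring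

end Derivative

end Matrix

theorem stmt4_general {m M : ℕ}
    (P : (Fin M → ℝ) → Matrix (Fin m) (Fin m) ℝ)
    (hsmooth : ∀ i j, ContDiff ℝ 1 (fun θ => P θ i j))
    (hP0 : ∀ θ i j, 0 ≤ P θ i j) (hP1 : ∀ θ i, ∑ j, P θ i j = 1)
    (n₀ : ℕ) (hn₀ : 0 < n₀) (κ : ℝ) (hκ : 0 < κ) (hκ1 : κ ≤ 1)
    (ν₀ : Fin m → ℝ) (hν₀1 : ∑ j, ν₀ j = 1)
    (hDoeblin : ∀ θ i j, κ * ν₀ j ≤ (P θ ^ n₀) i j)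
    (μ : (Fin M → ℝ) → Fin m → ℝ)
    (hμ0 : ∀ θ i, 0 ≤ μ θ i) (hμ1 : ∀ θ, ∑ i, μ θ i = 1)
    (hinv : ∀ θ, Matrix.vecMul (μ θ) (P θ) = μ θ)
    (θ : Fin M → ℝ) (l : Fin M) :
    HasLineDerivAt ℝ μ
      (fun j => ∑' k : ℕ,
        Matrix.vecMul
          (fun j' => ∑ i, μ θ i * fderiv ℝ (fun θ' => P θ' i j') θ (Pi.single l 1))
          (P θ ^ k) j)
      θ (Pi.single l 1) ∧
    ∀ k : ℕ,
      (1 / 2) * ∑ j, |Matrix.vecMul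
          (fun j' => ∑ i, μ θ i * fderiv ℝ (fun θ' => P θ' i j') θ (Pi.single l 1))
          (P θ ^ k) j|
        ≤ (1 / 2) * (⨆ i, ∑ j, |fderiv ℝ (fun θ' => P θ' i j) θ (Pi.single l 1)|)
            * (1 - κ) ^ (k / n₀) := by
  set D : Matrix (Fin m) (Fin m) ℝ :=
    of fun i j => fderiv ℝ (fun θ' => P θ' i j) θ (Pi.single l 1)
  change HasLineDerivAt ℝ μ (fun j => ∑' k, (μ θ ᵥ* D ᵥ* P θ ^ k) j) θ (Pi.single l 1) ∧
    ∀ k : ℕ, 1 / 2 * ∑ j, |(μ θ ᵥ* D ᵥ* P θ ^ k) j| ≤ 1 / 2 * (⨆ i, ∑ j, |D i j|) * _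
  have hQ θ' : P θ' ∈ rowStochastic ℝ (Fin m) := mem_rowStochastic_iff_sum.2 ⟨hP0 θ', hP1 θ'⟩
  have hP i j : HasFDerivAt (fun θ' => P θ' i j) (fderiv ℝ (fun θ' => P θ' i j) θ) θ :=
    ((hsmooth i j).differentiable one_ne_zero θ).hasFDerivAt
  have hv : ∑ j, (μ θ ᵥ* D) j = 0 := by
    have hD : D *ᵥ 1 = 0 := funext fun i => by
      simpa [D, mulVec, dotProduct] using
        congrArg (· (Pi.single l 1)) (sum_fderiv_eq_zero_of_sum_const (hP i) (hP1 · i))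
    rw [← dotProduct_one, ← dotProduct_mulVec, hD, dotProduct_zero]
  have hsum := hasSum_vecMul_pow (hQ θ) hκ hκ1 hν₀1 hn₀ (hDoeblin θ) hv
  refine ⟨?_, fun k => ?_⟩
  · rw [show (fun j => ∑' k, (μ θ ᵥ* D ᵥ* P θ ^ k) j) = _ from
      funext fun j => (Pi.hasSum.1 hsum j).tsum_eq]
    exact hasLineDerivAt_of_vecMul_shiftedGenerator_eq_one
      (fun θ' => isUnit_det_shiftedGenerator (hQ θ') hκ hκ1 hν₀1 hn₀ (hDoeblin θ'))
      (fun θ' => vecMul_shiftedGenerator_eq_one (hinv θ') (hμ1 θ')) hP _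
  · calc 1 / 2 * ∑ j, |(μ θ ᵥ* D ᵥ* P θ ^ k) j|
        ≤ 1 / 2 * ((1 - κ) ^ (k / n₀) * ∑ j, |(μ θ ᵥ* D) j|) := by
          gcongr
          exact sum_abs_vecMul_pow_le (hQ θ) hκ1 hν₀1 (hDoeblin θ) hv k
      _ ≤ 1 / 2 * ((1 - κ) ^ (k / n₀) * ⨆ i, ∑ j, |D i j|) := by
          gcongr
          exact sum_abs_vecMul_le_iSup (hμ0 θ) (hμ1 θ) D
      _ = 1 / 2 * (⨆ i, ∑ j, |D i j|) * (1 - κ) ^ (k / n₀) := by ring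

/-- Differentiability of the invariant measure of a smooth Doeblin family of
stochastic matrices, with the geometrically convergent series formula for the
directional derivative. -/
theorem stmt4 {m M : ℕ} (hm : 0 < m)
    (P : (Fin M → ℝ) → Matrix (Fin m) (Fin m) ℝ)
    (hsmooth : ∀ i j, ContDiff ℝ 1 (fun θ => P θ i j))
    (hP0 : ∀ θ i j, 0 ≤ P θ i j) (hP1 : ∀ θ i, ∑ j, P θ i j = 1)
    (n₀ : ℕ) (hn₀ : 0 < n₀) (κ : ℝ) (hκ : 0 < κ) (hκ1 : κ ≤ 1)
    (ν₀ : Fin m → ℝ) (hν₀0 : ∀ j, 0 ≤ ν₀ j) (hν₀1 : ∑ j, ν₀ j = 1)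
    (hDoeblin : ∀ θ i j, κ * ν₀ j ≤ (P θ ^ n₀) i j)
    (μ : (Fin M → ℝ) → Fin m → ℝ)
    (hμ0 : ∀ θ i, 0 ≤ μ θ i) (hμ1 : ∀ θ, ∑ i, μ θ i = 1)
    (hinv : ∀ θ, Matrix.vecMul (μ θ) (P θ) = μ θ)
    (hμunique : ∀ θ (μ' : Fin m → ℝ), (∀ i, 0 ≤ μ' i) → (∑ i, μ' i = 1) →
      Matrix.vecMul μ' (P θ) = μ' → μ' = μ θ)
    (θ : Fin M → ℝ) (l : Fin M) :
    HasLineDerivAt ℝ μ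
      (fun j => ∑' k : ℕ,
        Matrix.vecMul
          (fun j' => ∑ i, μ θ i * fderiv ℝ (fun θ' => P θ' i j') θ (Pi.single l 1))
          (P θ ^ k) j)
      θ (Pi.single l 1) ∧
    ∀ k : ℕ,
      (1 / 2) * ∑ j, |Matrix.vecMul
          (fun j' => ∑ i, μ θ i * fderiv ℝ (fun θ' => P θ' i j') θ (Pi.single l 1))
          (P θ ^ k) j|
        ≤ (1 / 2) * (⨆ i, ∑ j, |fderiv ℝ (fun θ' => P θ' i j) θ (Pi.single l 1)|)
            * (1 - κ) ^ (k / n₀) :=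
  stmt4_general P hsmooth hP0 hP1 n₀ hn₀ κ hκ hκ1 ν₀ hν₀1 hDoeblin μ hμ0 hμ1 hinv θ l
end

section
/- (Strong consistency of the MEE, finite-signal case) Let S be finite and assume (H0)–(H3). Let θ̂_n^{ME} = argmin_{θ'∈Θ} H(L_n^{Y,2}|Q_{θ'}^{Y,2}) where L_n^{Y,2} = (1/n)Σ_{k=1}^n δ_{(Y_{k-1},Y_k)}. If H(L_n^{Y,2}|Q_θ^{Y,2}) → 0 almost surely under P_{θ,ν} (which holds by the ergodic theorem), then θ̂_n^{ME} → θ almost surely. -/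
open Finset MeasureTheory Filter

private lemma relent_term_le {x y : ℝ} (hx : 0 ≤ x) (hy : 0 < y) :
    x - y ≤ x * Real.log (x / y) := by
  rcases eq_or_lt_of_le hx with h | h
  · simp [← h, hy.le]
  · have h1 : Real.log (y / x) ≤ y / x - 1 :=
      Real.log_le_sub_one_of_pos (by positivity)
  -- x * log (x/y) = - x * log (y/x)
    have h2 : Real.log (x / y) = - Real.log (y / x) := by
      rw [← Real.log_inv]; congr 1; field_simp
    have h3 := mul_le_mul_of_nonneg_left h1 h.le
    have h4 : x * (y / x - 1) = y - x := by field_simp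
    rw [h2]; nlinarith

private lemma relent_term_lt {x y : ℝ} (hx : 0 ≤ x) (hy : 0 < y) (hne : x ≠ y) :
    x - y < x * Real.log (x / y) := by
  rcases eq_or_lt_of_le hx with h | h
  · simp [← h]; simpa [← h] using hy
  · have hne1 : y / x ≠ 1 := by
      intro hc
      exact hne (by field_simp at hc; linarith)
    have h1 : Real.log (y / x) < y / x - 1 :=
      Real.log_lt_sub_one_of_pos (by positivity) hne1
    have h2 : Real.log (x / y) = - Real.log (y / x) := by
      rw [← Real.log_inv]; congr 1; field_simp
    have h3 := mul_lt_mul_of_pos_left h1 h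
    have h4 : x * (y / x - 1) = y - x := by field_simp
    rw [h2]; nlinarith

/-- Gibbs' inequality equality case. -/
private lemma gibbs_eq {ι : Type*} [Fintype ι] {ν μ : ι → ℝ} (hν : ∀ p, 0 ≤ ν p)
    (hμ : ∀ p, 0 < μ p) (hν1 : ∑ p, ν p = 1) (hμ1 : ∑ p, μ p = 1)
    (hle : ∑ p, ν p * Real.log (ν p / μ p) ≤ 0) : ν = μ := by
  by_contra hne
  obtain ⟨p0, hp0⟩ : ∃ p, ν p ≠ μ p := by
    by_contra hc
    push_neg at hc
    exact hne (funext hc)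
  have hlt : ∑ p, (ν p - μ p) < ∑ p, ν p * Real.log (ν p / μ p) := by
    refine Finset.sum_lt_sum (fun p _ => relent_term_le (hν p) (hμ p))
      ⟨p0, Finset.mem_univ p0, relent_term_lt (hν p0) (hμ p0) hp0⟩
  rw [Finset.sum_sub_distrib, hν1, hμ1] at hlt
  linarith

private lemma tendsto_relent {ι : Type*} [Fintype ι] {a b : ℕ → ι → ℝ} {ν μ : ι → ℝ}
    (ha : ∀ n p, 0 ≤ a n p) (hb : ∀ n p, 0 < b n p) (hμ : ∀ p, 0 < μ p)
    (hta : Tendsto a atTop (nhds ν)) (htb : Tendsto b atTop (nhds μ)) :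
    Tendsto (fun n => ∑ p, a n p * Real.log (a n p / b n p)) atTop
      (nhds (∑ p, ν p * Real.log (ν p / μ p))) := by
  have hν : ∀ p, 0 ≤ ν p := fun p =>
    le_of_tendsto_of_tendsto' tendsto_const_nhds
      (((continuous_apply p).tendsto ν).comp hta) (fun n => ha n p)
  have key : ∀ (x y : ℝ), 0 ≤ x → 0 < y →
      x * Real.log (x / y) = x * Real.log x - x * Real.log y := by
    intro x y hx hy
    rcases eq_or_lt_of_le hx with h | h
    · simp [← h]
    · rw [Real.log_div h.ne' hy.ne', mul_sub]
  have e1 : ∀ n, ∑ p, a n p * Real.log (a n p / b n p)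
      = ∑ p, (a n p * Real.log (a n p) - a n p * Real.log (b n p)) := fun n =>
    Finset.sum_congr rfl fun p _ => key _ _ (ha n p) (hb n p)
  have e2 : ∑ p, ν p * Real.log (ν p / μ p)
      = ∑ p, (ν p * Real.log (ν p) - ν p * Real.log (μ p)) :=
    Finset.sum_congr rfl fun p _ => key _ _ (hν p) (hμ p)
  simp only [e1, e2]
  apply tendsto_finset_sum
  intro p _
  have hap : Tendsto (fun n => a n p) atTop (nhds (ν p)) :=
    ((continuous_apply p).tendsto ν).comp hta
  have hbp : Tendsto (fun n => b n p) atTop (nhds (μ p)) :=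
    ((continuous_apply p).tendsto μ).comp htb
  exact ((Real.continuous_mul_log.tendsto _).comp hap).sub
    (hap.mul (((Real.continuousAt_log (hμ p).ne').tendsto).comp hbp))

/-- Strong consistency of the maximum entropy estimator in the finite-signal case:
if the relative entropy of the empirical pair distribution w.r.t. the true
2-dimensional law tends to 0 almost surely, then the minimizer `θ̂_n` of
`H(L_n^{Y,2} | Q_{θ'}^{Y,2})` converges almost surely to the true parameter. -/
theorem stmt19 {S : Type*} [Fintype S] [DecidableEq S]
    {Θ : Type*} [MetricSpace Θ] [CompactSpace Θ]
    {Ω : Type*} [MeasurableSpace Ω] (P : Measure Ω) [IsProbabilityMeasure P]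
    (Q : Θ → (S × S) → ℝ)
    (hQpos : ∀ θ' p, 0 < Q θ' p) (hQ1 : ∀ θ', ∑ p, Q θ' p = 1)
    (hQcont : Continuous Q) (hQinj : Function.Injective Q)
    (Y : ℕ → Ω → S) (θ : Θ) (θhat : ℕ → Ω → Θ)
    (L : ℕ → Ω → (S × S) → ℝ)
    (hL : ∀ n ω p, L n ω p =
      (1 / (n : ℝ)) * ∑ k ∈ Finset.range n,
        (if (Y k ω, Y (k + 1) ω) = p then (1 : ℝ) else 0))
    (H : ((S × S) → ℝ) → ((S × S) → ℝ) → ℝ)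
    (hH : ∀ ν μ', H ν μ' = ∑ p, ν p * Real.log (ν p / μ' p))
    (hmin : ∀ n ω θ', H (L n ω) (Q (θhat n ω)) ≤ H (L n ω) (Q θ'))
    (hconv : ∀ᵐ ω ∂P, Tendsto (fun n => H (L n ω) (Q θ)) atTop (nhds 0)) :
    ∀ᵐ ω ∂P, Tendsto (fun n => θhat n ω) atTop (nhds θ) := by
  filter_upwards [hconv] with ω hω
  -- basic facts about L
  have hLnn : ∀ n p, 0 ≤ L n ω p := by
    intro n p
    rw [hL]
    refine mul_nonneg (by positivity) (Finset.sum_nonneg fun k _ => ?_)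
    split <;> norm_num
  have hLle : ∀ n p, L n ω p ≤ 1 := by
    intro n p
    rw [hL]
    rcases Nat.eq_zero_or_pos n with h0 | h0
    · simp [h0]
    · have hs : ∑ k ∈ Finset.range n,
          (if (Y k ω, Y (k + 1) ω) = p then (1 : ℝ) else 0) ≤ n := by
        calc ∑ k ∈ Finset.range n, (if (Y k ω, Y (k + 1) ω) = p then (1 : ℝ) else 0)
            ≤ ∑ k ∈ Finset.range n, (1 : ℝ) :=
              Finset.sum_le_sum fun k _ => by split <;> norm_num
          _ = n := by simp
      have hn : (0 : ℝ) < n := by exact_mod_cast h0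
      rw [div_mul_eq_mul_div, one_mul, div_le_one hn]
      exact hs
  have hLsum : ∀ n : ℕ, 1 ≤ n → ∑ p, L n ω p = 1 := by
    intro n hn
    have hn' : (n : ℝ) ≠ 0 := by exact_mod_cast Nat.one_le_iff_ne_zero.mp hn
    simp only [hL, ← Finset.mul_sum]
    rw [Finset.sum_comm]
    have : ∀ k, ∑ p : S × S, (if (Y k ω, Y (k + 1) ω) = p then (1 : ℝ) else 0) = 1 := by
      intro k
      simp [Finset.sum_ite_eq]
    simp only [this, Finset.sum_const, Finset.card_range, nsmul_eq_mul, mul_one]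
    field_simp
  -- subsequence principle
  apply tendsto_of_subseq_tendsto
  intro ns hns
  -- extract convergent subsequence of θhat
  obtain ⟨θs, -, φ1, hφ1, hθs⟩ :=
    isCompact_univ.tendsto_subseq (x := fun n => θhat (ns n) ω)
      (fun n => Set.mem_univ _)
  -- extract convergent subsequence of L
  have hbox : IsCompact (Set.Icc (0 : (S × S) → ℝ) 1) := isCompact_Icc
  obtain ⟨νs, hνsmem, φ2, hφ2, hνs⟩ :=
    hbox.tendsto_subseq (x := fun k => L (ns (φ1 k)) ω)
      (fun k => Set.mem_Icc.mpr ⟨fun p => hLnn _ p, fun p => hLle _ p⟩)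
  set m : ℕ → ℕ := fun k => ns (φ1 (φ2 k)) with hm
  have hmtop : Tendsto m atTop atTop := hns.comp (hφ1.comp hφ2).tendsto_atTop
  have hLt : Tendsto (fun k => L (m k) ω) atTop (nhds νs) := hνs
  have hθt : Tendsto (fun k => θhat (m k) ω) atTop (nhds θs) :=
    hθs.comp hφ2.tendsto_atTop
  have hνsnn : ∀ p, 0 ≤ νs p := fun p => (Set.mem_Icc.mp hνsmem).1 p
  -- sum of the limit is 1
  have hνs1 : ∑ p, νs p = 1 := by
    have h1 : Tendsto (fun k => ∑ p, L (m k) ω p) atTop (nhds (∑ p, νs p)) :=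
      tendsto_finset_sum _ fun p _ => ((continuous_apply p).tendsto νs).comp hLt
    have h2 : ∀ᶠ k in atTop, (fun k => ∑ p, L (m k) ω p) k = 1 := by
      filter_upwards [hmtop.eventually_ge_atTop 1] with k hk
      exact hLsum _ hk
    exact tendsto_nhds_unique (h1.congr' h2) tendsto_const_nhds
  -- H (L (m k)) (Q θ) → H νs (Q θ) and also → 0
  have ht1 : Tendsto (fun k => H (L (m k) ω) (Q θ)) atTop (nhds (H νs (Q θ))) := by
    simp only [hH]
    exact tendsto_relent (fun n p => hLnn _ p) (fun n p => hQpos θ p) (hQpos θ)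
      hLt tendsto_const_nhds
  have hH0 : H νs (Q θ) = 0 := tendsto_nhds_unique ht1 (hω.comp hmtop)
  have hνsQ : νs = Q θ := by
    refine gibbs_eq hνsnn (hQpos θ) hνs1 (hQ1 θ) ?_
    rw [← hH νs (Q θ), hH0]
  -- H (L (m k)) (Q θhat) → H νs (Q θs)
  have ht2 : Tendsto (fun k => H (L (m k) ω) (Q (θhat (m k) ω))) atTop
      (nhds (H νs (Q θs))) := by
    simp only [hH]
    exact tendsto_relent (fun n p => hLnn _ p) (fun n p => hQpos _ p) (hQpos θs)
      hLt ((hQcont.tendsto θs).comp hθt)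
  have hle : H νs (Q θs) ≤ 0 := by
    rw [← hH0]
    exact le_of_tendsto_of_tendsto' ht2 ht1 fun k => hmin _ _ _
  have hνsQs : νs = Q θs := by
    refine gibbs_eq hνsnn (hQpos θs) hνs1 (hQ1 θs) ?_
    rw [← hH νs (Q θs)]; exact hle
  have hθeq : θs = θ := hQinj (hνsQs.symm.trans hνsQ)
  exact ⟨φ1 ∘ φ2, by rw [← hθeq]; exact hθt⟩
end
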